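/- arXiv:2508.08288 — 4 statements merged into one kernel-verified Lean document; each statement's English description precedes it below -/
import Mathlib

section
/- Let L̄ be concave and 1-homogeneous on ℝ^Θ_{≥0}, Θ finite, and suppose (γ₁, v) and (γ₂, v) are such that γ₁𝟙 + v and γ₂𝟙 + v both belong to ∂L̄ (the set of all super-gradients of L̄), where v is orthogonal to the all-ones vector 𝟙. Then γ₁ = γ₂. -/
open Finset

/-- In the decomposition `ζ = γ • 𝟙 + v` of a super-gradient of `L̄`, with
`v ⊥ 𝟙`, the constant `γ` is uniquely determined by `v`.  Here `∂L̄` is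
characterized dually: `ζ ∈ ∂L̄` iff `⟨μ, ζ⟩ ≥ L̄ μ` for all `μ ≥ 0` with
equality attained at some probability distribution (a Bayes point). -/
theorem canonical_coordinate_unique {Θ : Type} [Fintype Θ]
    (Lbar : (Θ → ℝ) → ℝ)
    (hconc : ∀ x y : Θ → ℝ, (∀ θ, 0 ≤ x θ) → (∀ θ, 0 ≤ y θ) →
      ∀ t : ℝ, 0 ≤ t → t ≤ 1 →
        t * Lbar x + (1 - t) * Lbar y ≤ Lbar (fun θ => t * x θ + (1 - t) * y θ))
    (hhom : ∀ x : Θ → ℝ, (∀ θ, 0 ≤ x θ) → ∀ l : ℝ, 0 < l →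
      Lbar (fun θ => l * x θ) = l * Lbar x)
    (v : Θ → ℝ) (hv : ∑ θ, v θ = 0) (γ₁ γ₂ : ℝ)
    (h₁ : (∀ μ : Θ → ℝ, (∀ θ, 0 ≤ μ θ) →
        (∑ θ, μ θ * (γ₁ + v θ)) ≥ Lbar μ) ∧
      ∃ P : Θ → ℝ, (∀ θ, 0 ≤ P θ) ∧ (∑ θ, P θ) = 1 ∧
        (∑ θ, P θ * (γ₁ + v θ)) = Lbar P)
    (h₂ : (∀ μ : Θ → ℝ, (∀ θ, 0 ≤ μ θ) →
        (∑ θ, μ θ * (γ₂ + v θ)) ≥ Lbar μ) ∧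
      ∃ P : Θ → ℝ, (∀ θ, 0 ≤ P θ) ∧ (∑ θ, P θ) = 1 ∧
        (∑ θ, P θ * (γ₂ + v θ)) = Lbar P) :
    γ₁ = γ₂ := by
  obtain ⟨hi₁, P₁, hP₁0, hP₁s, hP₁e⟩ := h₁
  obtain ⟨hi₂, P₂, hP₂0, hP₂s, hP₂e⟩ := h₂
  have key : ∀ (P : Θ → ℝ) (γ : ℝ), (∑ θ, P θ) = 1 →
      (∑ θ, P θ * (γ + v θ)) = γ + ∑ θ, P θ * v θ := by
    intro P γ hs
    simp [mul_add, Finset.sum_add_distrib, ← Finset.sum_mul, hs]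
  have A := hi₂ P₁ hP₁0
  have B := hi₁ P₂ hP₂0
  rw [key P₁ γ₂ hP₁s] at A
  rw [key P₂ γ₁ hP₂s] at B
  rw [key P₁ γ₁ hP₁s] at hP₁e
  rw [key P₂ γ₂ hP₂s] at hP₂e
  linarith
end

section
/- Let L̄ be concave and 1-homogeneous on ℝ^Θ_{≥0}, Θ finite, with every super-gradient attained (for each P there exists a Bayes element). Then the projection of the super-gradient set ∂L̄ onto the hyperplane 𝟙^⊥ is a convex set. -/
open Finset

/-- The projection of the super-gradient set `∂L̄` onto the hyperplane
`𝟙^⊥` (subtracting the mean) is a convex set.  `∂L̄` is characterized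
dually: `ζ ∈ ∂L̄` iff `⟨μ, ζ⟩ ≥ L̄ μ` for all `μ ≥ 0` with equality at some
probability distribution; continuity of `L̄` guarantees the attainment of
the relevant minima over the (compact) probability simplex. -/
theorem projected_supergradients_convex {Θ : Type} [Fintype Θ]
    (Lbar : (Θ → ℝ) → ℝ)
    (hconc : ∀ x y : Θ → ℝ, (∀ θ, 0 ≤ x θ) → (∀ θ, 0 ≤ y θ) →
      ∀ t : ℝ, 0 ≤ t → t ≤ 1 →
        t * Lbar x + (1 - t) * Lbar y ≤ Lbar (fun θ => t * x θ + (1 - t) * y θ))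
    (hhom : ∀ x : Θ → ℝ, (∀ θ, 0 ≤ x θ) → ∀ l : ℝ, 0 < l →
      Lbar (fun θ => l * x θ) = l * Lbar x)
    (hcont : Continuous Lbar) :
    Convex ℝ {v : Θ → ℝ | ∃ ζ : Θ → ℝ,
      ((∀ μ : Θ → ℝ, (∀ θ, 0 ≤ μ θ) → (∑ θ, μ θ * ζ θ) ≥ Lbar μ) ∧
        ∃ P : Θ → ℝ, (∀ θ, 0 ≤ P θ) ∧ (∑ θ, P θ) = 1 ∧
          (∑ θ, P θ * ζ θ) = Lbar P) ∧
      v = fun θ => ζ θ - (∑ θ', ζ θ') / (Fintype.card Θ)} := by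
  rintro x ⟨ζ₁, ⟨hζ₁, P₁, hP₁0, hP₁s, _⟩, hx⟩ y ⟨ζ₂, ⟨hζ₂, _, _, _, _⟩, hy⟩ a b ha hb hab
  have hne : Nonempty Θ := by
    by_contra h
    rw [not_nonempty_iff] at h
    simp [Finset.univ_eq_empty] at hP₁s
  have hcard : (0:ℝ) < (Fintype.card Θ : ℝ) := by exact_mod_cast Fintype.card_pos
  set ζ : Θ → ℝ := fun θ => a * ζ₁ θ + b * ζ₂ θ with hζdef
  -- the convex combination satisfies the supergradient inequality
  have hineq : ∀ μ : Θ → ℝ, (∀ θ, 0 ≤ μ θ) → Lbar μ ≤ ∑ θ, μ θ * ζ θ := by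
    intro μ hμ
    have h1 := hζ₁ μ hμ
    have h2 := hζ₂ μ hμ
    have hsum : ∑ θ, μ θ * ζ θ
        = a * (∑ θ, μ θ * ζ₁ θ) + b * (∑ θ, μ θ * ζ₂ θ) := by
      rw [Finset.mul_sum, Finset.mul_sum, ← Finset.sum_add_distrib]
      refine Finset.sum_congr rfl fun θ _ => ?_
      simp [hζdef]; ring
    have h3 := mul_le_mul_of_nonneg_left h1 ha
    have h4 := mul_le_mul_of_nonneg_left h2 hb
    have h5 : (a + b) * Lbar μ = Lbar μ := by rw [hab, one_mul]
    nlinarith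
  -- L̄ 0 = 0
  have hz : Lbar (fun _ => (0:ℝ)) = 0 := by
    have h := hhom (fun _ => 0) (fun _ => le_refl 0) 2 (by norm_num)
    simp only [mul_zero] at h
    linarith
  -- minimize ⟨P, ζ⟩ - L̄ P over the simplex
  have hcompact : IsCompact (stdSimplex ℝ Θ) := isCompact_stdSimplex ℝ Θ
  have hPmem : P₁ ∈ stdSimplex ℝ Θ := ⟨hP₁0, hP₁s⟩
  have hcontf : Continuous (fun P : Θ → ℝ => (∑ θ, P θ * ζ θ) - Lbar P) :=
    (continuous_finset_sum _ fun θ _ => (continuous_apply θ).mul continuous_const).sub hcont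
  obtain ⟨P₀, hP₀mem, hP₀min⟩ :=
    hcompact.exists_isMinOn ⟨P₁, hPmem⟩ hcontf.continuousOn
  set c : ℝ := (∑ θ, P₀ θ * ζ θ) - Lbar P₀ with hcdef
  refine ⟨fun θ => ζ θ - c, ⟨?_, P₀, hP₀mem.1, hP₀mem.2, ?_⟩, ?_⟩
  · -- supergradient inequality for the shifted ζ
    intro μ hμ
    have hsplit : ∑ θ, μ θ * (ζ θ - c)
        = (∑ θ, μ θ * ζ θ) - (∑ θ, μ θ) * c := by
      rw [Finset.sum_mul, ← Finset.sum_sub_distrib]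
      exact Finset.sum_congr rfl fun θ _ => by ring
    rcases eq_or_lt_of_le (Finset.sum_nonneg fun θ _ => hμ θ) with hs | hs
    · -- total mass zero: μ = 0
      have hμ0 : μ = fun _ => 0 := by
        funext θ
        exact (Finset.sum_eq_zero_iff_of_nonneg fun θ _ => hμ θ).1 hs.symm θ (mem_univ θ)
      rw [hμ0]
      simp [hz, ge_iff_le]
    · -- total mass positive: rescale to the simplex
      set s : ℝ := ∑ θ, μ θ with hsdef
      have hsne : s ≠ 0 := ne_of_gt hs
      set P : Θ → ℝ := fun θ => μ θ / s with hPdef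
      have hP0 : ∀ θ, 0 ≤ P θ := fun θ => div_nonneg (hμ θ) (le_of_lt hs)
      have hPs : ∑ θ, P θ = 1 := by
        simp only [hPdef, ← Finset.sum_div]
        exact div_self hsne
      have hμP : ∀ θ, μ θ = s * P θ := fun θ => by
        show μ θ = s * (μ θ / s)
        field_simp [hPdef]
      have hLμ : Lbar μ = s * Lbar P := by
        have := hhom P hP0 s hs
        rw [← this]
        congr 1
        funext θ
        exact hμP θ
      have hsumμ : ∑ θ, μ θ * ζ θ = s * ∑ θ, P θ * ζ θ := by
        rw [Finset.mul_sum]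
        refine Finset.sum_congr rfl fun θ _ => ?_
        rw [hμP θ]; ring
      have hmin : c ≤ (∑ θ, P θ * ζ θ) - Lbar P := hP₀min ⟨hP0, hPs⟩
      have hkey : Lbar P ≤ (∑ θ, P θ * ζ θ) - c := by linarith
      rw [ge_iff_le, hsplit, hsumμ, hLμ]
      nlinarith [mul_le_mul_of_nonneg_left hkey (le_of_lt hs)]
  · -- equality at P₀
    have : ∑ θ, P₀ θ * (ζ θ - c) = (∑ θ, P₀ θ * ζ θ) - (∑ θ, P₀ θ) * c := by
      rw [Finset.sum_mul, ← Finset.sum_sub_distrib]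
      exact Finset.sum_congr rfl fun θ _ => by ring
    rw [this, hP₀mem.2]
    simp [hcdef]
  · -- the projection is the desired convex combination
    have hS : ∑ θ', (ζ θ' - c) = (∑ θ', ζ θ') - (Fintype.card Θ : ℝ) * c := by
      rw [Finset.sum_sub_distrib, Finset.sum_const, card_univ, nsmul_eq_mul]
    have hSζ : ∑ θ', ζ θ' = a * (∑ θ', ζ₁ θ') + b * (∑ θ', ζ₂ θ') := by
      rw [Finset.mul_sum, Finset.mul_sum, ← Finset.sum_add_distrib]
    funext θ
    have hxθ : x θ = ζ₁ θ - (∑ θ', ζ₁ θ') / (Fintype.card Θ : ℝ) := by rw [hx]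
    have hyθ : y θ = ζ₂ θ - (∑ θ', ζ₂ θ') / (Fintype.card Θ : ℝ) := by rw [hy]
    show a * x θ + b * y θ = _
    rw [hxθ, hyθ, hS, hSζ]
    simp only [hζdef]
    field_simp
    ring
end

section
/- Let L̄ be concave and 1-homogeneous on ℝ^Θ_{≥0}, Θ finite, and let Ψ : Γ̂ → ℝ be defined on the projection Γ̂ of ∂L̄ onto 𝟙^⊥ by the condition v + Ψ(v)𝟙 ∈ ∂L̄. Then Ψ is a convex function. -/
open Finset

/-- Convexity of `Ψ`: if `Ψ` assigns to each `v` in the projection `Γ̂` of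
`∂L̄` onto `𝟙^⊥` the (unique) constant with `v + Ψ(v) • 𝟙 ∈ ∂L̄`, then `Ψ`
is convex on `Γ̂`.  Membership `ζ ∈ ∂L̄` is the dual characterization:
`⟨μ, ζ⟩ ≥ L̄ μ` for all `μ ≥ 0` with equality at some probability
distribution. -/
theorem Psi_convex {Θ : Type} [Fintype Θ]
    (Lbar : (Θ → ℝ) → ℝ)
    (hconc : ∀ x y : Θ → ℝ, (∀ θ, 0 ≤ x θ) → (∀ θ, 0 ≤ y θ) →
      ∀ t : ℝ, 0 ≤ t → t ≤ 1 →
        t * Lbar x + (1 - t) * Lbar y ≤ Lbar (fun θ => t * x θ + (1 - t) * y θ))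
    (hhom : ∀ x : Θ → ℝ, (∀ θ, 0 ≤ x θ) → ∀ l : ℝ, 0 < l →
      Lbar (fun θ => l * x θ) = l * Lbar x)
    (hcont : Continuous Lbar)
    -- the set of super-gradients of `Lbar` (dual characterization)
    (dL : Set (Θ → ℝ))
    (hdL : ∀ ζ : Θ → ℝ, ζ ∈ dL ↔
      ((∀ μ : Θ → ℝ, (∀ θ, 0 ≤ μ θ) → (∑ θ, μ θ * ζ θ) ≥ Lbar μ) ∧
        ∃ P : Θ → ℝ, (∀ θ, 0 ≤ P θ) ∧ (∑ θ, P θ) = 1 ∧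
          (∑ θ, P θ * ζ θ) = Lbar P))
    -- the projection of `dL` onto `𝟙^⊥`
    (Γ : Set (Θ → ℝ))
    (hΓ : ∀ v : Θ → ℝ, v ∈ Γ ↔ ∃ ζ ∈ dL,
      v = fun θ => ζ θ - (∑ θ', ζ θ') / (Fintype.card Θ))
    (Ψ : (Θ → ℝ) → ℝ)
    (hΨ : ∀ v ∈ Γ, (fun θ => v θ + Ψ v) ∈ dL) :
    ∀ v₁ ∈ Γ, ∀ v₂ ∈ Γ, ∀ l : ℝ, 0 ≤ l → l ≤ 1 →
      Ψ (fun θ => l * v₁ θ + (1 - l) * v₂ θ) ≤ l * Ψ v₁ + (1 - l) * Ψ v₂ := by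
  intro v₁ hv₁ v₂ hv₂ l hl0 hl1
  have h₁ := (hdL _).mp (hΨ v₁ hv₁)
  have h₂ := (hdL _).mp (hΨ v₂ hv₂)
  obtain ⟨h₁ineq, P₁, hP₁0, hP₁1, hP₁eq⟩ := h₁
  obtain ⟨h₂ineq, -⟩ := h₂
  -- Θ is nonempty
  have hΘ : Nonempty Θ := by
    by_contra h
    rw [not_nonempty_iff] at h
    have : (∑ θ, P₁ θ) = 0 := by simp
    rw [hP₁1] at this; norm_num at this
  have hcard : (0:ℝ) < Fintype.card Θ := by
    have := Fintype.card_pos_iff.mpr hΘ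
    exact_mod_cast this
  -- sums of v₁, v₂ vanish
  have hsum : ∀ v ∈ Γ, ∑ θ, v θ = 0 := by
    intro v hv
    obtain ⟨ζ, -, hζ⟩ := (hΓ v).mp hv
    rw [hζ]
    rw [Finset.sum_sub_distrib]
    field_simp
    rw [Finset.sum_const, Finset.card_univ, nsmul_eq_mul, ← mul_div_assoc,
      mul_div_cancel_left₀ _ (ne_of_gt hcard), sub_self]
  have hsv₁ := hsum v₁ hv₁
  have hsv₂ := hsum v₂ hv₂
  set c : ℝ := l * Ψ v₁ + (1 - l) * Ψ v₂ with hc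
  set ζ : Θ → ℝ := fun θ => l * v₁ θ + (1 - l) * v₂ θ + c with hζdef
  -- ζ dominates Lbar
  have hζineq : ∀ μ : Θ → ℝ, (∀ θ, 0 ≤ μ θ) → (∑ θ, μ θ * ζ θ) ≥ Lbar μ := by
    intro μ hμ
    have e1 := h₁ineq μ hμ
    have e2 := h₂ineq μ hμ
    have key : (∑ θ, μ θ * ζ θ)
        = l * (∑ θ, μ θ * (v₁ θ + Ψ v₁)) + (1 - l) * (∑ θ, μ θ * (v₂ θ + Ψ v₂)) := by
      rw [Finset.mul_sum, Finset.mul_sum, ← Finset.sum_add_distrib]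
      apply Finset.sum_congr rfl
      intro θ _
      simp only [hζdef, hc]
      ring
    rw [key]
    have h1l : 0 ≤ 1 - l := by linarith
    calc Lbar μ = l * Lbar μ + (1 - l) * Lbar μ := by ring
      _ ≤ l * (∑ θ, μ θ * (v₁ θ + Ψ v₁)) + (1 - l) * (∑ θ, μ θ * (v₂ θ + Ψ v₂)) := by
          gcongr <;> simpa using ‹_›
  -- minimize the gap over the simplex
  have hScomp : IsCompact (stdSimplex ℝ Θ) := isCompact_stdSimplex ℝ Θ
  have hSne : (stdSimplex ℝ Θ).Nonempty := ⟨P₁, hP₁0, hP₁1⟩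
  have hfcont : Continuous (fun P : Θ → ℝ => (∑ θ, P θ * ζ θ) - Lbar P) := by
    apply Continuous.sub _ hcont
    exact continuous_finset_sum _ (fun θ _ => (continuous_apply θ).mul continuous_const)
  obtain ⟨Q, hQmem, hQmin'⟩ := hScomp.exists_isMinOn hSne hfcont.continuousOn
  have hQmin : ∀ P ∈ stdSimplex ℝ Θ, (∑ θ, Q θ * ζ θ) - Lbar Q ≤ (∑ θ, P θ * ζ θ) - Lbar P :=
    fun P hP => hQmin' hP
  obtain ⟨hQ0, hQ1⟩ := hQmem
  set γ : ℝ := (∑ θ, Q θ * ζ θ) - Lbar Q with hγ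
  have hγ0 : 0 ≤ γ := by
    have := hζineq Q hQ0
    simp only [hγ]; linarith
  have hL0 : Lbar (fun _ => (0:ℝ)) = 0 := by
    have := hhom (fun _ => 0) (fun _ => le_refl 0) 2 (by norm_num)
    simp only [mul_zero] at this
    linarith
  -- the shifted ζ' is in dL
  have hζ' : (fun θ => ζ θ - γ) ∈ dL := by
    rw [hdL]
    constructor
    · intro μ hμ
      set s : ℝ := ∑ θ, μ θ with hs
      have hs0 : 0 ≤ s := Finset.sum_nonneg (fun θ _ => hμ θ)
      rcases eq_or_lt_of_le hs0 with hseq | hspos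
      · -- μ = 0
        have hμ0 : ∀ θ ∈ Finset.univ, μ θ = 0 := by
          rw [← Finset.sum_eq_zero_iff_of_nonneg (fun θ _ => hμ θ)]
          exact hseq.symm
        have : μ = fun _ => (0:ℝ) := funext (fun θ => hμ0 θ (Finset.mem_univ θ))
        rw [this, hL0]
        simp
      · -- scale
        set P : Θ → ℝ := fun θ => μ θ / s with hP
        have hPmem : P ∈ stdSimplex ℝ Θ := by
          constructor
          · intro θ; exact div_nonneg (hμ θ) hs0
          · simp only [hP, ← Finset.sum_div]
            exact div_self (ne_of_gt hspos)
        have hμP : μ = fun θ => s * P θ := by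
          funext θ; simp only [hP]; field_simp
        have hQle := hQmin P hPmem
        have hLμ : Lbar μ = s * Lbar P := by
          rw [hμP]; exact hhom P hPmem.1 s hspos
        have hsumμ : (∑ θ, μ θ * (ζ θ - γ)) = s * ((∑ θ, P θ * ζ θ) - γ) := by
          calc (∑ θ, μ θ * (ζ θ - γ))
              = ∑ θ, (s * (P θ * ζ θ) - (s * γ) * P θ) :=
                Finset.sum_congr rfl (fun θ _ => by simp only [hμP]; ring)
            _ = s * (∑ θ, P θ * ζ θ) - (s * γ) * (∑ θ, P θ) := by
                rw [Finset.sum_sub_distrib, ← Finset.mul_sum, ← Finset.mul_sum]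
            _ = s * ((∑ θ, P θ * ζ θ) - γ) := by rw [hPmem.2]; ring
        rw [hsumμ, hLμ]
        have : Lbar P ≤ (∑ θ, P θ * ζ θ) - γ := by
          simp only [hγ] at hQle ⊢; linarith
        have := mul_le_mul_of_nonneg_left this hs0
        linarith [ge_iff_le.mp (le_refl (0:ℝ))]
    · exact ⟨Q, hQ0, hQ1, by
        rw [show (∑ θ, Q θ * (ζ θ - γ)) = (∑ θ, Q θ * ζ θ) - γ by
          rw [show (∑ θ, Q θ * (ζ θ - γ)) = ∑ θ, (Q θ * ζ θ - Q θ * γ) from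
            Finset.sum_congr rfl (fun θ _ => by ring)]
          rw [Finset.sum_sub_distrib, ← Finset.sum_mul, hQ1, one_mul]]
        simp only [hγ]; ring⟩
  -- the midpoint v is in Γ
  set v : Θ → ℝ := fun θ => l * v₁ θ + (1 - l) * v₂ θ with hvdef
  have hζ'sum : (∑ θ', (ζ θ' - γ)) = (Fintype.card Θ : ℝ) * (c - γ) := by
    rw [Finset.sum_sub_distrib]
    simp only [hζdef]
    rw [Finset.sum_add_distrib, Finset.sum_add_distrib, ← Finset.mul_sum, ← Finset.mul_sum,
      hsv₁, hsv₂]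
    simp [Finset.card_univ, mul_comm, mul_sub]
  have hvΓ : v ∈ Γ := by
    rw [hΓ]
    refine ⟨fun θ => ζ θ - γ, hζ', ?_⟩
    funext θ
    rw [hζ'sum]
    have : (Fintype.card Θ : ℝ) * (c - γ) / (Fintype.card Θ : ℝ) = c - γ := by
      field_simp
    rw [this]
    simp only [hvdef, hζdef]; ring
  -- conclude
  obtain ⟨-, P, hP0, hP1, hPeq⟩ := (hdL _).mp (hΨ v hvΓ)
  obtain ⟨hζ'ineq, -⟩ := (hdL _).mp hζ'
  have hPineq := hζ'ineq P hP0
  have e1 : (∑ θ, P θ * (v θ + Ψ v)) = (∑ θ, P θ * v θ) + Ψ v := by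
    rw [show (∑ θ, P θ * (v θ + Ψ v)) = ∑ θ, (P θ * v θ + P θ * Ψ v) from
      Finset.sum_congr rfl (fun θ _ => by ring)]
    rw [Finset.sum_add_distrib, ← Finset.sum_mul, hP1, one_mul]
  have e2 : (∑ θ, P θ * (ζ θ - γ)) = (∑ θ, P θ * v θ) + c - γ := by
    rw [show (∑ θ, P θ * (ζ θ - γ)) = ∑ θ, (P θ * v θ + P θ * c - P θ * γ) from
      Finset.sum_congr rfl (fun θ _ => by simp only [hζdef, hvdef]; ring)]
    rw [Finset.sum_sub_distrib, Finset.sum_add_distrib, ← Finset.sum_mul, ← Finset.sum_mul,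
      hP1, one_mul, one_mul]
  rw [e1] at hPeq
  rw [e2] at hPineq
  have : Ψ v ≤ c - γ := by linarith [ge_iff_le.mp hPineq]
  calc Ψ (fun θ => l * v₁ θ + (1 - l) * v₂ θ) = Ψ v := rfl
    _ ≤ c - γ := this
    _ ≤ c := by linarith
end

section
/- An experiment e : Θ → Δ(Z) divides e' : Θ → Δ(Z') if and only if for every finite action set A, M_{e'}(Θ,A) ⊆ M_e(Θ,A), where M_e(Θ,A) is the set of Markov kernels Θ → Δ(A) factoring through e. -/
open Finset

/-- A Markov kernel from `X` to `Y`: rows are probability distributions. -/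
def IsMarkov {X Y : Type} [Fintype Y] (f : X → Y → ℝ) : Prop :=
  (∀ x y, 0 ≤ f x y) ∧ ∀ x, ∑ y, f x y = 1

/-- Composition of kernels: `(comp f e) x w = ∑ y, f y w * e x y`. -/
def comp {X Y W : Type} [Fintype Y] (f : Y → W → ℝ) (e : X → Y → ℝ) :
    X → W → ℝ :=
  fun x w => ∑ y, f y w * e x y

/-- `e` divides `e'` iff for every finite action set `A`, every strategy
factoring through `e'` also factors through `e`:
`M_{e'}(Θ, A) ⊆ M_e(Θ, A)`. -/
theorem divides_iff_strategies_subset {Θ Z Z' : Type}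
    [Fintype Θ] [Fintype Z] [Fintype Z']
    (e : Θ → Z → ℝ) (he : IsMarkov e)
    (e' : Θ → Z' → ℝ) (he' : IsMarkov e') :
    (∃ f : Z → Z' → ℝ, IsMarkov f ∧ e' = comp f e) ↔
    (∀ (A : Type) (_ : Fintype A) (d : Θ → A → ℝ),
      (∃ g' : Z' → A → ℝ, IsMarkov g' ∧ d = comp g' e') →
      (∃ g : Z → A → ℝ, IsMarkov g ∧ d = comp g e)) := by
  classical
  constructor
  · rintro ⟨f, hf, rfl⟩ A _ d ⟨g', hg', rfl⟩
    refine ⟨comp g' f, ⟨fun z a => Finset.sum_nonneg fun z' _ =>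
      mul_nonneg (hg'.1 z' a) (hf.1 z z'), fun z => ?_⟩, ?_⟩
    · simp only [comp]
      rw [Finset.sum_comm]
      simp_rw [← Finset.sum_mul, hg'.2]
      simpa using hf.2 z
    · funext θ a
      simp only [comp, Finset.sum_mul, mul_assoc]
      rw [Finset.sum_comm]
      congr 1; funext z'
      rw [← Finset.mul_sum]
  · intro h
    obtain ⟨g, hg, hge⟩ := h Z' inferInstance e'
      ⟨fun z' a => if z' = a then 1 else 0,
        ⟨fun z' a => by simp only []; split <;> norm_num, fun z' => by simp⟩, by
        funext θ a; simp [comp]⟩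
    exact ⟨g, hg, hge⟩
end
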